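/- Selection semantics of ∀: for a simple term τ, a formula Δ, and a world w, we have w ⊨ ∀τ·Δ if and only if w ⊨ Δ and every world w' obtained from w by changing the states of some variables that are set differently in τ (to arbitrary new states) also satisfies Δ. -/

import Mathlib

open scoped Classical

/-- Formulas over finite-domain variables: each variable `X : V` has domain `D X`.
A literal of `X` is (intended to be) a nonempty proper subset of `D X`'s states. -/
inductive Form (V : Type) (D : V → Type) : Type where
  | top : Form V D
  | bot : Form V D
  | lit : (X : V) → Set (D X) → Form V D
  | neg : Form V D → Form V D
  | and : Form V D → Form V D → Form V D
  | or : Form V D → Form V D → Form V D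

namespace Form

variable {V : Type} {D : V → Type}

/-- Satisfaction of a formula by a world. -/
def sat (w : ∀ X, D X) : Form V D → Prop
  | top => True
  | bot => False
  | lit X s => w X ∈ s
  | neg φ => ¬ sat w φ
  | and φ ψ => sat w φ ∧ sat w ψ
  | or φ ψ => sat w φ ∨ sat w ψ

/-- Conditioning `Δ|x` of a formula on state `x` of variable `X`: each `X`-literal
`ℓ` is replaced by `⊤` if `x ∈ ℓ` and by `⊥` otherwise. -/
noncomputable def cond (X : V) (x : D X) : Form V D → Form V D
  | top => top
  | bot => bot
  | lit Y s => if h : X = Y then (if h ▸ x ∈ s then top else bot) else lit Y s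
  | neg φ => neg (cond X x φ)
  | and φ ψ => and (cond X x φ) (cond X x ψ)
  | or φ ψ => or (cond X x φ) (cond X x ψ)

/-- The selection operator `⊓x·Δ := (Δ|x) ∧ Δ`. -/
noncomputable def sel (X : V) (x : D X) (Δ : Form V D) : Form V D :=
  and (cond X x Δ) Δ

/-- Logical equivalence of formulas (same models). -/
def equiv (φ ψ : Form V D) : Prop := ∀ w, sat w φ ↔ sat w ψ

/-- Variable `X` occurs (appears) in the formula. -/
def occurs (X : V) : Form V D → Prop
  | top => False
  | bot => False
  | lit Y _ => Y = X
  | neg φ => occurs X φ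
  | and φ ψ => occurs X φ ∨ occurs X ψ
  | or φ ψ => occurs X φ ∨ occurs X ψ

/-- NNF: negation-free, and every literal is a nonempty proper subset of states. -/
def isNNF : Form V D → Prop
  | top => True
  | bot => True
  | lit _ s => s.Nonempty ∧ s ≠ Set.univ
  | neg _ => False
  | and φ ψ => isNNF φ ∧ isNNF ψ
  | or φ ψ => isNNF φ ∧ isNNF ψ

/-- The `X`-literal `s` occurs in the formula. -/
def litOccurs (X : V) (s : Set (D X)) : Form V D → Prop
  | top => False
  | bot => False
  | lit Y t => ∃ h : Y = X, h ▸ t = s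
  | neg φ => litOccurs X s φ
  | and φ ψ => litOccurs X s φ ∨ litOccurs X s ψ
  | or φ ψ => litOccurs X s φ ∨ litOccurs X s ψ

/-- Every literal in the formula is implied by the instance `I`
(i.e., contains `I`'s state of its variable). -/
def litsImp (I : ∀ X, D X) : Form V D → Prop
  | top => True
  | bot => True
  | lit X s => I X ∈ s
  | neg φ => litsImp I φ
  | and φ ψ => litsImp I φ ∧ litsImp I ψ
  | or φ ψ => litsImp I φ ∧ litsImp I ψ

/-- Iterated selection `⊓` over a list of variables, using states from `v`. -/
noncomputable def selList (v : ∀ X, D X) : List V → Form V D → Form V D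
  | [], Δ => Δ
  | X :: L, Δ => sel X (v X) (selList v L Δ)

/-- The general reason `⊓I·Δ`: selection applied for all states of instance `I`. -/
noncomputable def selAll [Fintype V] (I : ∀ X, D X) (Δ : Form V D) : Form V D :=
  selList I (Finset.univ : Finset V).toList Δ

noncomputable def listAnd : List (Form V D) → Form V D
  | [] => top
  | φ :: L => and φ (listAnd L)

/-- Universal literal quantification `∀x·Δ := (Δ|x) ∧ ⋀_{y ≠ x} (x ∨ Δ|y)`. -/
noncomputable def uq (X : V) [Fintype (D X)] (x : D X) (Δ : Form V D) : Form V D :=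
  letI : DecidableEq (D X) := fun _ _ => Classical.propDecidable _
  and (cond X x Δ)
    (listAnd ((((Finset.univ : Finset (D X)).erase x).toList).map
      (fun y => or (lit X ({x} : Set (D X))) (cond X y Δ))))

/-- Iterated universal literal quantification over a list of variables. -/
noncomputable def uqList [∀ X, Fintype (D X)] (v : ∀ X, D X) : List V → Form V D → Form V D
  | [], Δ => Δ
  | X :: L, Δ => uq X (v X) (uqList v L Δ)

/-- The complete reason `∀I·Δ`. -/
noncomputable def uqAll [Fintype V] [∀ X, Fintype (D X)] (I : ∀ X, D X) (Δ : Form V D) :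
    Form V D :=
  uqList I (Finset.univ : Finset V).toList Δ

end Form

/-- A term: a conjunction of literals over distinct variables. Variable `X` is
mentioned iff `lits X ≠ univ`; each literal is nonempty (terms are consistent). -/
structure MvTerm (V : Type) (D : V → Type) : Type where
  lits : ∀ X, Set (D X)
  nonempty : ∀ X, (lits X).Nonempty

/-- A clause: a disjunction of literals over distinct variables. Variable `X` is
mentioned iff `lits X ≠ ∅`; each literal is proper (clauses are never valid). -/
structure MvClause (V : Type) (D : V → Type) : Type where
  lits : ∀ X, Set (D X)
  proper : ∀ X, lits X ≠ Set.univ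

namespace MvTerm

variable {V : Type} {D : V → Type}

def tsat (w : ∀ X, D X) (τ : MvTerm V D) : Prop := ∀ X, w X ∈ τ.lits X

def vars (τ : MvTerm V D) : Set V := {X | τ.lits X ≠ Set.univ}

/-- A simple term assigns a single state to each of its variables. -/
def simple (τ : MvTerm V D) : Prop :=
  ∀ X, τ.lits X ≠ Set.univ → ∃ x, τ.lits X = ({x} : Set (D X))

end MvTerm

namespace MvClause

variable {V : Type} {D : V → Type}

def csat (w : ∀ X, D X) (σ : MvClause V D) : Prop := ∃ X, w X ∈ σ.lits X

def vars (σ : MvClause V D) : Set V := {X | σ.lits X ≠ (∅ : Set (D X))}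

/-- A simple clause: all its literals are single states. -/
def simple (σ : MvClause V D) : Prop :=
  ∀ X, σ.lits X ≠ (∅ : Set (D X)) → ∃ x, σ.lits X = ({x} : Set (D X))

end MvClause

section PrimeDefs

variable {V : Type} {D : V → Type}

def termImp (τ τ' : MvTerm V D) : Prop := ∀ w, τ.tsat w → τ'.tsat w

def clauseImp (σ σ' : MvClause V D) : Prop := ∀ w, σ.csat w → σ'.csat w

/-- A prime implicant of the set of worlds `M`: a ⊨-maximal term implying `M`. -/
def isPrimeImplicantOf (M : (∀ X, D X) → Prop) (τ : MvTerm V D) : Prop :=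
  (∀ w, τ.tsat w → M w) ∧
  ∀ τ' : MvTerm V D, (∀ w, τ'.tsat w → M w) → termImp τ τ' → τ' = τ

/-- A prime implicate of the set of worlds `M`: a ⊨-minimal clause implied by `M`. -/
def isPrimeImplicateOf (M : (∀ X, D X) → Prop) (σ : MvClause V D) : Prop :=
  (∀ w, M w → σ.csat w) ∧
  ∀ σ' : MvClause V D, (∀ w, M w → σ'.csat w) → clauseImp σ' σ → σ' = σ

/-- Remove subsumed terms: delete any term strictly implied by another in the set. -/
def removeSubsumedT (S : Set (MvTerm V D)) : Set (MvTerm V D) :=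
  {τ ∈ S | ¬ ∃ τ' ∈ S, τ' ≠ τ ∧ termImp τ τ'}

/-- Remove subsumed clauses: delete any clause strictly implying another in the set. -/
def removeSubsumedC (S : Set (MvClause V D)) : Set (MvClause V D) :=
  {σ ∈ S | ¬ ∃ σ' ∈ S, σ' ≠ σ ∧ clauseImp σ' σ}

end PrimeDefs

/-! At a world `w`, `∀x·Δ` for a state `x` of `X` holds iff `Δ` holds at `w` when `w X = x`, and
at every `X`-variant of `w` otherwise: the conjunct `Δ|x` covers the variant at `x`, and each
`x ∨ Δ|y` covers the variant at `y` exactly when `w X ≠ x`. Quantifying over the variables of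
`τ` one after the other composes these one-variable variations. -/

namespace Form

variable {V : Type} {D : V → Type}

theorem sat_cond (X : V) (x : D X) (Δ : Form V D) (w : ∀ X, D X) :
    sat w (cond X x Δ) ↔ sat (Function.update w X x) Δ := by
  induction Δ with
  | top | bot => simp [cond, sat]
  | lit Y t =>
    by_cases h : X = Y
    · subst h
      by_cases hx : x ∈ t <;> simp [cond, sat, hx]
    · simp [cond, h, sat, Function.update_of_ne (Ne.symm h)]
  | neg φ ih => simp [cond, sat, ih]
  | and φ ψ ih₁ ih₂ | or φ ψ ih₁ ih₂ => simp [cond, sat, ih₁, ih₂]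

theorem sat_listAnd (L : List (Form V D)) (w : ∀ X, D X) :
    sat w (listAnd L) ↔ ∀ φ ∈ L, sat w φ := by
  induction L with
  | nil => simp [listAnd, sat]
  | cons φ L ih => simp [listAnd, sat, ih]

theorem sat_uq (X : V) [Fintype (D X)] (x : D X) (Δ : Form V D) (w : ∀ X, D X) :
    sat w (uq X x Δ) ↔ ∀ y, (y = w X ∨ w X ≠ x) → sat (Function.update w X y) Δ := by
  have hsat : sat w (uq X x Δ) ↔
      sat (Function.update w X x) Δ ∧ ∀ y ≠ x, w X = x ∨ sat (Function.update w X y) Δ := by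
    simp [uq, sat, sat_cond, sat_listAnd]
  rw [hsat]
  by_cases hwx : w X = x
  · subst hwx
    simp
  · simpa [hwx] using and_forall_ne (p := fun y => sat (Function.update w X y) Δ) x

theorem sat_uqList [∀ X, Fintype (D X)] (v : ∀ X, D X) (L : List V) (Δ : Form V D)
    (w : ∀ X, D X) :
    sat w (uqList v L Δ) ↔
      ∀ w' : ∀ X, D X, (∀ X, w' X ≠ w X → X ∈ L ∧ w X ≠ v X) → sat w' Δ := by
  induction L generalizing w with
  | nil => simp [uqList, ← funext_iff]
  | cons X L ih =>
    simp only [uqList, sat_uq, ih]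
    constructor
    · -- move `X` to its final state `w' X` first; `ih` handles the remaining variables
      intro H w' hw'
      refine H (w' X) (or_iff_not_imp_left.2 fun h => (hw' X h).2) w' fun Y hY => ?_
      rcases eq_or_ne Y X with rfl | hYX
      · simp at hY
      · rw [Function.update_of_ne hYX] at hY ⊢
        obtain ⟨hmem, hvar⟩ := hw' Y hY
        exact ⟨(List.mem_cons.1 hmem).resolve_left hYX, hvar⟩
    · intro H y hy w' hw'
      refine H w' fun Y hY => ?_
      rcases eq_or_ne Y X with rfl | hYX
      · refine ⟨List.mem_cons_self, ?_⟩
        rcases hy with rfl | hvar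
        · simpa using (hw' Y (by simpa using hY)).2
        · exact hvar
      · obtain ⟨hmem, hvar⟩ := hw' Y (by rwa [Function.update_of_ne hYX])
        rw [Function.update_of_ne hYX] at hvar
        exact ⟨List.mem_cons_of_mem _ hmem, hvar⟩

end Form

/-- selection semantics of `∀`. For a simple term `τ` (domain `s`,
values `v`), `w ⊨ ∀τ·Δ` iff `w ⊨ Δ` and every world `w'` obtained from `w` by
changing (to arbitrary new states) some variables of `τ` that are set differently
in `τ` satisfies `Δ`. -/
theorem forall_semantics {V : Type} {D : V → Type} [∀ X, Fintype (D X)]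
    (Δ : Form V D) (s : Finset V) (v : ∀ X, D X) (w : ∀ X, D X) :
    Form.sat w (Form.uqList v s.toList Δ) ↔
      Form.sat w Δ ∧
      ∀ w' : ∀ X, D X, (∀ X, w' X ≠ w X → X ∈ s ∧ w X ≠ v X) → Form.sat w' Δ := by
  simp only [Form.sat_uqList, Finset.mem_toList]
  exact (and_iff_right_of_imp fun H => H w fun X h => absurd rfl h).symm
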